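/- arXiv:2206.06988 — 7 statements merged into one kernel-verified Lean document; each statement's English description precedes it below -/
import Mathlib

section
/- Touching separation theorem: Let f, f' : 2^S → ℕ be modular set functions and g : 2^S → ℕ a supermodular set function on a finite set S, with f(∅) = f'(∅) = g(∅) = 0 and max(f(X), g(X)) ≤ f'(X) for every X ⊆ S. Then there exists a modular set function h : 2^S → ℕ such that max(f(X), g(X)) ≤ h(X) ≤ f'(X) for every X ⊆ S, and h(S) = max_{T ⊆ S} ( f(T) + g(S \ T) ). -/
/-!
Let `p X = max_{T ⊆ X} (f T + g (X \ T))`. Since `f` is modular and monotone and `g` is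
supermodular, `p` is monotone and supermodular; it lies above `f` and `g` and below `f'`.
Start from the weights `x ↦ f' {x}`, whose sums represent `f'`, and lower them one unit at a time
as long as their sums still dominate `p` on every set. At a minimal such weight every element of
positive weight lies in a set where sum and `p` agree; by supermodularity these tight sets are
closed under union, so the weights vanish outside one tight set, and the total weight is `p univ`.
-/

open Finset

section Modular

variable {S : Type*} [DecidableEq S] {f : Finset S → ℕ}

theorem eq_sum_singleton_of_modular (hf : ∀ X Y : Finset S, f X + f Y = f (X ∪ Y) + f (X ∩ Y))
    (hf0 : f ∅ = 0) (X : Finset S) : f X = ∑ x ∈ X, f {x} := by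
  induction X using Finset.induction_on with
  | empty => simpa using hf0
  | @insert a s ha ih =>
    have h := hf {a} s
    rw [← insert_eq, singleton_inter_of_notMem ha, hf0] at h
    rw [sum_insert ha, ← ih]
    omega

theorem monotone_of_modular (hf : ∀ X Y : Finset S, f X + f Y = f (X ∪ Y) + f (X ∩ Y))
    (hf0 : f ∅ = 0) : Monotone f := by
  intro X Y hXY
  have h := hf X (Y \ X)
  rw [union_sdiff_of_subset hXY, inter_sdiff_self, hf0] at h
  omega

theorem add_le_add_of_modular_of_monotone
    (hf : ∀ X Y : Finset S, f X + f Y = f (X ∪ Y) + f (X ∩ Y)) (hmono : Monotone f)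
    {U V U' V' : Finset S} (hunion : U ∪ V ⊆ U' ∪ V') (hinter : U ∩ V ⊆ U' ∩ V') :
    f U + f V ≤ f U' + f V' := by
  rw [hf U V, hf U' V']
  exact Nat.add_le_add (hmono hunion) (hmono hinter)

end Modular

section SupConvolution

variable {S : Type*} [DecidableEq S] {f g : Finset S → ℕ}

def supConvolution (f g : Finset S → ℕ) (X : Finset S) : ℕ :=
  X.powerset.sup fun T => f T + g (X \ T)

theorem le_supConvolution {T X : Finset S} (hTX : T ⊆ X) :
    f T + g (X \ T) ≤ supConvolution f g X :=
  le_sup (f := fun T => f T + g (X \ T)) (mem_powerset.mpr hTX)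

theorem le_supConvolution_sdiff {A X : Finset S} (hAX : A ⊆ X) :
    f (X \ A) + g A ≤ supConvolution f g X := by
  have := le_supConvolution (f := f) (g := g) (sdiff_subset (s := X) (t := A))
  rwa [Finset.sdiff_sdiff_eq_self hAX] at this

theorem exists_supConvolution_eq_sdiff (X : Finset S) :
    ∃ A ⊆ X, supConvolution f g X = f (X \ A) + g A := by
  obtain ⟨T, hT, hmax⟩ := exists_mem_eq_sup X.powerset ⟨∅, empty_mem_powerset X⟩
    fun T => f T + g (X \ T)
  refine ⟨X \ T, sdiff_subset, ?_⟩
  rw [Finset.sdiff_sdiff_eq_self (mem_powerset.mp hT)]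
  exact hmax

theorem supConvolution_empty (hf0 : f ∅ = 0) (hg0 : g ∅ = 0) : supConvolution f g ∅ = 0 := by
  simp [supConvolution, hf0, hg0]

theorem left_le_supConvolution (hg0 : g ∅ = 0) (X : Finset S) : f X ≤ supConvolution f g X := by
  simpa [hg0] using le_supConvolution (f := f) (g := g) (subset_refl X)

theorem right_le_supConvolution (hf0 : f ∅ = 0) (X : Finset S) : g X ≤ supConvolution f g X := by
  simpa [hf0] using le_supConvolution (f := f) (g := g) (empty_subset X)

theorem supConvolution_le {h : Finset S → ℕ}
    (hh : ∀ X Y : Finset S, h X + h Y = h (X ∪ Y) + h (X ∩ Y)) (hh0 : h ∅ = 0)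
    (hfh : ∀ X, f X ≤ h X) (hgh : ∀ X, g X ≤ h X) (X : Finset S) :
    supConvolution f g X ≤ h X := by
  refine Finset.sup_le fun T hT => ?_
  have hsplit := hh T (X \ T)
  rw [union_sdiff_of_subset (mem_powerset.mp hT), inter_sdiff_self, hh0] at hsplit
  have := hfh T
  have := hgh (X \ T)
  omega

theorem supConvolution_mono (hf : Monotone f) : Monotone (supConvolution f g) := by
  intro X Y hXY
  obtain ⟨A, hAX, hA⟩ := exists_supConvolution_eq_sdiff (f := f) (g := g) X
  calc supConvolution f g X = f (X \ A) + g A := hA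
    _ ≤ f (Y \ A) + g A := Nat.add_le_add_right (hf (sdiff_subset_sdiff hXY subset_rfl)) _
    _ ≤ supConvolution f g Y := le_supConvolution_sdiff (hAX.trans hXY)

theorem supConvolution_supermodular
    (hf : ∀ X Y : Finset S, f X + f Y = f (X ∪ Y) + f (X ∩ Y)) (hfmono : Monotone f)
    (hg : ∀ X Y : Finset S, g X + g Y ≤ g (X ∪ Y) + g (X ∩ Y)) (X Y : Finset S) :
    supConvolution f g X + supConvolution f g Y ≤
      supConvolution f g (X ∪ Y) + supConvolution f g (X ∩ Y) := by
  obtain ⟨A, hAX, hA⟩ := exists_supConvolution_eq_sdiff (f := f) (g := g) X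
  obtain ⟨B, hBY, hB⟩ := exists_supConvolution_eq_sdiff (f := f) (g := g) Y
  have hfpart : f (X \ A) + f (Y \ B) ≤ f ((X ∪ Y) \ (A ∪ B)) + f ((X ∩ Y) \ (A ∩ B)) := by
    refine add_le_add_of_modular_of_monotone hf hfmono (fun x => ?_) (fun x => ?_) <;>
      have := @hAX x <;> have := @hBY x <;> simp only [mem_union, mem_inter, mem_sdiff] <;> tauto
  have hunion := le_supConvolution_sdiff (f := f) (g := g) (union_subset_union hAX hBY)
  have hinter := le_supConvolution_sdiff (f := f) (g := g) (inter_subset_inter hAX hBY)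
  have := hg A B
  omega

end SupConvolution

section Base

variable {S : Type*} [Fintype S] [DecidableEq S] {p : Finset S → ℕ}

theorem sum_eq_of_forall_mem_tight (hp0 : p ∅ = 0) (hmono : Monotone p)
    (hsuper : ∀ X Y : Finset S, p X + p Y ≤ p (X ∪ Y) + p (X ∩ Y))
    {w : S → ℕ} (hpw : ∀ X, p X ≤ ∑ x ∈ X, w x)
    (htight : ∀ x, w x ≠ 0 → ∃ X, x ∈ X ∧ ∑ y ∈ X, w y = p X) :
    ∑ x, w x = p univ := by
  set tight := univ.filter fun X : Finset S => ∑ y ∈ X, w y = p X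
  have hsup_tight : ∑ y ∈ tight.sup id, w y = p (tight.sup id) := by
    refine sup_induction (p := fun A : Finset S => ∑ y ∈ A, w y = p A) ?_ ?_ ?_
    · simpa using hp0.symm
    · intro A hA B hB
      have := hsuper A B
      have := hpw (A ∪ B)
      have := hpw (A ∩ B)
      have : ∑ y ∈ A ∪ B, w y + ∑ y ∈ A ∩ B, w y = ∑ y ∈ A, w y + ∑ y ∈ B, w y :=
        sum_union_inter
      change ∑ y ∈ A ∪ B, w y = p (A ∪ B)
      omega
    · intro X hX
      exact (mem_filter.mp hX).2
  have hsupport : ∑ x ∈ tight.sup id, w x = ∑ x, w x := by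
    refine sum_subset (subset_univ _) fun x _ hx => ?_
    by_contra hwx
    obtain ⟨X, hxX, hX⟩ := htight x hwx
    exact hx (le_sup (f := id) (mem_filter.mpr ⟨mem_univ X, hX⟩) hxX)
  have := hmono (subset_univ (tight.sup id))
  have := hpw univ
  omega

theorem exists_weight_le_of_supermodular (hp0 : p ∅ = 0) (hmono : Monotone p)
    (hsuper : ∀ X Y : Finset S, p X + p Y ≤ p (X ∪ Y) + p (X ∩ Y))
    {b : S → ℕ} (hpb : ∀ X, p X ≤ ∑ x ∈ X, b x) :
    ∃ w : S → ℕ, (∀ X, p X ≤ ∑ x ∈ X, w x) ∧ w ≤ b ∧ ∑ x, w x = p univ := by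
  set admissible := {w : S → ℕ | (∀ X, p X ≤ ∑ x ∈ X, w x) ∧ w ≤ b}
  obtain ⟨w, ⟨hpw, hwb⟩, hmin⟩ :=
    (measure fun w : S → ℕ => ∑ x, w x).wf.has_min admissible ⟨b, hpb, le_rfl⟩
  refine ⟨w, hpw, hwb, sum_eq_of_forall_mem_tight hp0 hmono hsuper hpw fun x hx => ?_⟩
  set w' := Function.update w x (w x - 1)
  have hw : w = w' + Pi.single x 1 := by
    ext y
    rcases eq_or_ne y x with rfl | hyx
    · simp [w']
      omega
    · simp [w', hyx]
  have hsum (X : Finset S) : ∑ y ∈ X, w y = ∑ y ∈ X, w' y + if x ∈ X then 1 else 0 := by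
    conv_lhs => rw [hw]
    rw [Pi.add_def, sum_add_distrib, sum_pi_single']
  have hw'_le_b : w' ≤ b := (hw ▸ le_self_add : w' ≤ w).trans hwb
  have hw'_lt : ∑ y, w' y < ∑ y, w y := by
    rw [hsum univ]
    simp
  have hnot : ¬ ∀ X, p X ≤ ∑ y ∈ X, w' y := fun h => hmin w' ⟨h, hw'_le_b⟩ hw'_lt
  push Not at hnot
  obtain ⟨X, hX⟩ := hnot
  have hsumX := hsum X
  have := hpw X
  by_cases hxX : x ∈ X
  · rw [if_pos hxX] at hsumX
    exact ⟨X, hxX, by omega⟩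
  · rw [if_neg hxX] at hsumX
    omega

end Base

/-- Touching separation theorem: For modular `f, f'` and supermodular `g`
with `f(∅) = f'(∅) = g(∅) = 0` and `max(f(X), g(X)) ≤ f'(X)` for all `X`, there is a
modular `h` with `max(f(X), g(X)) ≤ h(X) ≤ f'(X)` for all `X` and
`h(S) = max_{T ⊆ S} (f(T) + g(S \ T))`. -/
theorem stmt5 {S : Type*} [Fintype S] [DecidableEq S]
    (f f' g : Finset S → ℕ)
    (hf : ∀ X Y : Finset S, f X + f Y = f (X ∪ Y) + f (X ∩ Y))
    (hf' : ∀ X Y : Finset S, f' X + f' Y = f' (X ∪ Y) + f' (X ∩ Y))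
    (hg : ∀ X Y : Finset S, g X + g Y ≤ g (X ∪ Y) + g (X ∩ Y))
    (hf0 : f ∅ = 0) (hf'0 : f' ∅ = 0) (hg0 : g ∅ = 0)
    (hle : ∀ X : Finset S, max (f X) (g X) ≤ f' X) :
    ∃ h : Finset S → ℕ,
      (∀ X Y : Finset S, h X + h Y = h (X ∪ Y) + h (X ∩ Y)) ∧
      (∀ X : Finset S, max (f X) (g X) ≤ h X ∧ h X ≤ f' X) ∧
      h Finset.univ = Finset.univ.powerset.sup fun T => f T + g (Finset.univ \ T) := by
  have hfmono := monotone_of_modular hf hf0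
  have hf'_sum := eq_sum_singleton_of_modular hf' hf'0
  have hp_le_f' := supConvolution_le hf' hf'0 (fun X => (le_max_left _ _).trans (hle X))
    (fun X => (le_max_right _ _).trans (hle X))
  obtain ⟨w, hpw, hwb, hw⟩ := exists_weight_le_of_supermodular (p := supConvolution f g)
    (supConvolution_empty hf0 hg0) (supConvolution_mono hfmono)
    (supConvolution_supermodular hf hfmono hg) (b := fun x => f' {x})
    fun X => hf'_sum X ▸ hp_le_f' X
  refine ⟨fun X => ∑ x ∈ X, w x, fun X Y => sum_union_inter.symm, fun X => ⟨?_, ?_⟩, hw⟩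
  · exact (max_le (left_le_supConvolution hg0 X) (right_le_supConvolution hf0 X)).trans (hpw X)
  · rw [hf'_sum X]
    exact sum_le_sum fun x _ => hwb x
end

section
/- Let f : 2^S → ℕ be modular and g : 2^S → ℕ be supermodular on a finite set S with f(∅) = g(∅) = 0. Define g'(X) = max_{T ⊆ X} ( g(T) + f(X \ T) ). Then g' is supermodular. -/
/-!
Take maximisers `T ⊆ X` and `U ⊆ Y` for `g' X` and `g' Y`; then `T ∪ U ⊆ X ∪ Y` and
`T ∩ U ⊆ X ∩ Y` are admissible for `g' (X ∪ Y)` and `g' (X ∩ Y)`. Supermodularity of `g`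
handles the `g`-terms. For the `f`-terms, the complements `(X ∪ Y) \ (T ∪ U)` and
`(X ∩ Y) \ (T ∩ U)` have the same union and intersection as `X \ T` and `Y \ U`, so
modularity of `f` gives equality.
-/

open Finset

namespace Finset

variable {S : Type*} [DecidableEq S] {X Y T U : Finset S}

theorem sdiff_union_sdiff_of_subset (hT : T ⊆ X) (hU : U ⊆ Y) :
    (X \ T) ∪ (Y \ U) = ((X ∪ Y) \ (T ∪ U)) ∪ ((X ∩ Y) \ (T ∩ U)) := by
  ext x
  have := @hT x
  have := @hU x
  simp only [mem_union, mem_sdiff, mem_inter]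
  tauto

theorem sdiff_inter_sdiff_of_subset (hT : T ⊆ X) (hU : U ⊆ Y) :
    (X \ T) ∩ (Y \ U) = ((X ∪ Y) \ (T ∪ U)) ∩ ((X ∩ Y) \ (T ∩ U)) := by
  ext x
  have := @hT x
  have := @hU x
  simp only [mem_union, mem_sdiff, mem_inter]
  tauto

end Finset

section Exchange

variable {S M : Type*} [DecidableEq S]
  {f g : Finset S → M} {X Y T U : Finset S}

theorem modular_sdiff_add_sdiff [Add M] (hf : ∀ X Y, f X + f Y = f (X ∪ Y) + f (X ∩ Y))
    (hT : T ⊆ X) (hU : U ⊆ Y) :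
    f (X \ T) + f (Y \ U) = f ((X ∪ Y) \ (T ∪ U)) + f ((X ∩ Y) \ (T ∩ U)) := by
  rw [hf, hf ((X ∪ Y) \ (T ∪ U)), sdiff_union_sdiff_of_subset hT hU,
    sdiff_inter_sdiff_of_subset hT hU]

theorem add_sdiff_add_le_union_add_inter [AddCommMonoid M] [PartialOrder M] [IsOrderedAddMonoid M]
    (hf : ∀ X Y, f X + f Y = f (X ∪ Y) + f (X ∩ Y))
    (hg : ∀ X Y, g X + g Y ≤ g (X ∪ Y) + g (X ∩ Y)) (hT : T ⊆ X) (hU : U ⊆ Y) :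
    g T + f (X \ T) + (g U + f (Y \ U)) ≤
      g (T ∪ U) + f ((X ∪ Y) \ (T ∪ U)) + (g (T ∩ U) + f ((X ∩ Y) \ (T ∩ U))) := by
  rw [add_add_add_comm, add_add_add_comm (g (T ∪ U)), modular_sdiff_add_sdiff hf hT hU]
  exact add_le_add_left (hg T U) _

end Exchange

theorem stmt6_general {S : Type*} [DecidableEq S]
    (f g : Finset S → ℕ)
    (hf : ∀ X Y : Finset S, f X + f Y = f (X ∪ Y) + f (X ∩ Y))
    (hg : ∀ X Y : Finset S, g X + g Y ≤ g (X ∪ Y) + g (X ∩ Y))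
    (g' : Finset S → ℕ)
    (hg' : ∀ X : Finset S, g' X = X.powerset.sup fun T => g T + f (X \ T)) :
    ∀ X Y : Finset S, g' X + g' Y ≤ g' (X ∪ Y) + g' (X ∩ Y) := by
  intro X Y
  obtain ⟨T, hTX, hT⟩ := exists_mem_eq_sup X.powerset ⟨∅, empty_mem_powerset X⟩
    fun T => g T + f (X \ T)
  obtain ⟨U, hUY, hU⟩ := exists_mem_eq_sup Y.powerset ⟨∅, empty_mem_powerset Y⟩
    fun U => g U + f (Y \ U)
  rw [mem_powerset] at hTX hUY
  rw [hg' X, hg' Y, hT, hU, hg' (X ∪ Y), hg' (X ∩ Y)]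
  calc g T + f (X \ T) + (g U + f (Y \ U))
      ≤ g (T ∪ U) + f ((X ∪ Y) \ (T ∪ U)) + (g (T ∩ U) + f ((X ∩ Y) \ (T ∩ U))) :=
        add_sdiff_add_le_union_add_inter hf hg hTX hUY
    _ ≤ _ := add_le_add
        (le_sup (f := fun T => g T + f ((X ∪ Y) \ T))
          (mem_powerset.2 (union_subset_union hTX hUY)))
        (le_sup (f := fun T => g T + f ((X ∩ Y) \ T))
          (mem_powerset.2 (inter_subset_inter hTX hUY)))

/-- For modular `f` and supermodular `g` with `f(∅) = g(∅) = 0`,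
the function `g'(X) = max_{T ⊆ X} (g(T) + f(X \ T))` is supermodular. -/
theorem stmt6 {S : Type*} [Fintype S] [DecidableEq S]
    (f g : Finset S → ℕ)
    (hf : ∀ X Y : Finset S, f X + f Y = f (X ∪ Y) + f (X ∩ Y))
    (hg : ∀ X Y : Finset S, g X + g Y ≤ g (X ∪ Y) + g (X ∩ Y))
    (hf0 : f ∅ = 0) (hg0 : g ∅ = 0)
    (g' : Finset S → ℕ)
    (hg' : ∀ X : Finset S, g' X = X.powerset.sup fun T => g T + f (X \ T)) :
    ∀ X Y : Finset S, g' X + g' Y ≤ g' (X ∪ Y) + g' (X ∩ Y) :=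
  stmt6_general f g hf hg g' hg'
end

section
/- MoV Fair Matching on complete bipartite graphs: Let U be a finite set of vertices colored by colors c_1, …, c_{|C|} with |U_{c_1}| ≥ |U_{c_2}| ≥ … (and |U_{c_i}| := 0 for i > |C|), let V have k vertices, and let ℓ ∈ ℕ. There exists a partition of U into k (possibly empty) parts M(v_1), …, M(v_k) each of which is ℓ-fair with respect to MoV (i.e., for each part, the count of the most frequent color minus the count of the second most frequent color is at most ℓ) if and only if |U_{c_1}| ≤ ℓ·k + Σ_{i∈[k]} |U_{c_{i+1}}|. -/
/-- `S` is `ℓ`-fair w.r.t. MoV: the count of the most frequent color minus the count of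
the second most frequent color (a color occurring zero times counts if fewer than two
colors appear) is at most `ℓ`. -/
def MovFair {A : Type*} [DecidableEq A] (col : A → ℕ) (ℓ : ℕ) (S : Finset A) : Prop :=
  ((S.image col).sup fun c => (S.filter fun a => col a = c).card)
    - (((S.image col) ×ˢ (S.image col)).filter fun p : ℕ × ℕ => p.1 ≠ p.2).sup
        (fun p => min ((S.filter fun a => col a = p.1).card)
                      ((S.filter fun a => col a = p.2).card)) ≤ ℓ

/-!
Call `S` *`k`-bounded* (`MovBounded`) if every colour's count is at most `ℓk` plus the counts of
some `k` other colours. A set is `ℓ`-fair iff it is `1`-bounded (the top colour is within `ℓ` of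
some other colour), and boundedness adds up over disjoint unions, so a partition into `k` fair
parts makes `U` `k`-bounded; for the top colour, by sortedness, this is the stated inequality.

Conversely, take a `(k+1)`-bounded set that is not fair, with dominant colour `m` and
runner-up `c₁` of count `t`. Peel off the part made of `ℓ + t` elements of `m`, all of `c₁`,
and everything above `r := |S_m| - ℓ - t` of each other colour: it is fair, and the rest,
whose top colour is `m` with count `r`, is `k`-bounded.
-/

open Finset

lemma exists_subset_erase_sum_le {α : Type*} [DecidableEq α] (f : α → ℕ) {k t : ℕ}
    {D : Finset α} (hD : #D ≤ k + 1) (a : α) (ht : ∀ d ∈ D, f d ≤ t) :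
    ∃ D' ⊆ D.erase a, #D' ≤ k ∧ ∑ d ∈ D, f d ≤ t + ∑ d ∈ D', f d := by
  rcases D.eq_empty_or_nonempty with rfl | ⟨d₀, hd₀⟩
  · exact ⟨∅, empty_subset _, by simp, by simp⟩
  let d := if a ∈ D then a else d₀
  have hd : d ∈ D := by unfold d; split_ifs with h <;> assumption
  refine ⟨D.erase d, fun x hx => ?_, by rw [card_erase_of_mem hd]; omega, ?_⟩
  · obtain ⟨hxd, hxD⟩ := mem_erase.1 hx
    refine mem_erase.2 ⟨fun hxa => hxd ?_, hxD⟩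
    subst hxa
    simp [d, hxD]
  · rw [← add_sum_erase D f hd]
    exact Nat.add_le_add_right (ht d hd) _

lemma le_add_sum_min_of_le {α : Type*} (f : α → ℕ) {D : Finset α} {r a : ℕ}
    (h : r ≤ a + ∑ d ∈ D, f d) : r ≤ a + ∑ d ∈ D, min (f d) r := by
  by_cases hbig : ∃ d ∈ D, r ≤ f d
  · obtain ⟨d, hd, hrd⟩ := hbig
    have := single_le_sum (f := fun d => min (f d) r) (fun _ _ => Nat.zero_le _) hd
    simp only [min_eq_right hrd] at this
    omega
  · push Not at hbig
    rwa [sum_congr rfl fun d hd => min_eq_left (hbig d hd).le]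

lemma sum_le_sum_range_of_antitone {M : Type*} [AddCommMonoid M] [PartialOrder M]
    [IsOrderedAddMonoid M] {f : ℕ → M} (hf : Antitone f) {n : ℕ} (D : Finset ℕ)
    (hD : ∀ d ∈ D, n ≤ d) : ∑ d ∈ D, f d ≤ ∑ i ∈ range #D, f (n + i) := by
  induction D using Finset.induction_on_max with
  | empty => simp
  | insert a s hlt ih =>
    have has : a ∉ s := fun h => lt_irrefl a (hlt a h)
    have hcard : #s ≤ a - n := by
      simpa using card_le_card (fun x hx => mem_Ico.2 ⟨hD x (mem_insert_of_mem hx), hlt x hx⟩ :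
        s ⊆ Ico n a)
    have hna := hD a (mem_insert_self a s)
    rw [sum_insert has, card_insert_of_notMem has, sum_range_succ, add_comm]
    exact add_le_add (ih fun d hd => hD d (mem_insert_of_mem hd)) (hf (by omega))

section

variable {A : Type*} (col : A → ℕ) (ℓ : ℕ)

def colorCount (S : Finset A) (c : ℕ) : ℕ := #{a ∈ S | col a = c}

def MovBounded (k : ℕ) (S : Finset A) : Prop :=
  ∀ c, ∃ D : Finset ℕ, #D ≤ k ∧ c ∉ D ∧
    colorCount col S c ≤ ℓ * k + ∑ d ∈ D, colorCount col S d

variable {col ℓ}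

lemma colorCount_pos_iff {S : Finset A} {c : ℕ} :
    0 < colorCount col S c ↔ c ∈ S.image col := by
  simp [colorCount, card_pos, filter_nonempty_iff]

@[simp]
lemma colorCount_empty (c : ℕ) : colorCount col ∅ c = 0 := rfl

lemma exists_colorCount_le_of_ne (S : Finset A) (m : ℕ) :
    ∃ c₁ ≠ m, ∀ c ≠ m, colorCount col S c ≤ colorCount col S c₁ := by
  obtain ⟨c₁, hc₁, hmax⟩ := exists_max_image ((insert (m + 1) (S.image col)).erase m)
    (colorCount col S) ⟨m + 1, by simp⟩
  refine ⟨c₁, ne_of_mem_erase hc₁, fun c hcm => ?_⟩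
  by_cases hc : c ∈ S.image col
  · exact hmax c (by simp [hcm, hc])
  · rw [← colorCount_pos_iff] at hc
    omega

lemma movBounded_one_iff {S : Finset A} :
    MovBounded col ℓ 1 S ↔
      ∀ c, ∃ d ≠ c, colorCount col S c ≤ ℓ + colorCount col S d := by
  constructor
  · intro h c
    obtain ⟨D, hD, hcD, hc⟩ := h c
    rcases Nat.le_one_iff_eq_zero_or_eq_one.1 hD with hD | hD
    · rw [card_eq_zero.1 hD] at hc
      exact ⟨c + 1, by omega, by simp only [mul_one, sum_empty, add_zero] at hc; omega⟩
    · obtain ⟨d, rfl⟩ := card_eq_one.1 hD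
      exact ⟨d, fun h => hcD (by simp [h]), by simpa using hc⟩
  · intro h c
    obtain ⟨d, hdc, hd⟩ := h c
    exact ⟨{d}, by simp, by simpa using hdc.symm, by simpa using hd⟩

lemma movBounded_empty (k : ℕ) : MovBounded col ℓ k ∅ :=
  fun c => ⟨∅, by simp, by simp, by simp⟩

lemma eq_empty_of_movBounded_zero {S : Finset A} (h : MovBounded col ℓ 0 S) : S = ∅ := by
  refine eq_empty_of_forall_notMem fun a ha => ?_
  obtain ⟨D, hD, -, hc⟩ := h (col a)
  rw [card_eq_zero.1 (Nat.le_zero.1 hD)] at hc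
  have := colorCount_pos_iff.2 (mem_image_of_mem col ha)
  simp only [mul_zero, sum_empty, add_zero] at hc
  omega

lemma movBounded_of_forall_le {k : ℕ} {S : Finset A} {m : ℕ}
    (hm : ∀ c, colorCount col S c ≤ colorCount col S m) (D : Finset ℕ) (hD : #D ≤ k)
    (hmD : m ∉ D) (h : colorCount col S m ≤ ℓ * k + ∑ d ∈ D, colorCount col S d) :
    MovBounded col ℓ k S := by
  intro c
  by_cases hcm : c = m
  · exact hcm ▸ ⟨D, hD, hmD, h⟩
  rcases Nat.eq_zero_or_pos k with rfl | hk
  · exact ⟨D, hD, by simp [card_eq_zero.1 (Nat.le_zero.1 hD)], (hm c).trans h⟩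
  · refine ⟨{m}, by simp; omega, by simpa using hcm, ?_⟩
    rw [sum_singleton]
    exact (hm c).trans (Nat.le_add_left _ _)

variable [DecidableEq A]

lemma exists_subset_colorCount_eq (S : Finset A) (n : ℕ → ℕ)
    (hn : ∀ c, n c ≤ colorCount col S c) : ∃ T ⊆ S, ∀ c, colorCount col T c = n c := by
  choose R hRS hR using fun c => exists_subset_card_eq (hn c)
  refine ⟨{a ∈ S | a ∈ R (col a)}, filter_subset _ _, fun c => ?_⟩
  rw [← hR c, colorCount, filter_filter]
  congr 1
  ext a
  simp only [mem_filter]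
  constructor
  · rintro ⟨-, ha, rfl⟩
    exact ha
  · intro ha
    obtain ⟨haS, rfl⟩ := mem_filter.1 (hRS _ ha)
    exact ⟨haS, ha, rfl⟩

lemma colorCount_union {S T : Finset A} (h : Disjoint S T) (c : ℕ) :
    colorCount col (S ∪ T) c = colorCount col S c + colorCount col T c := by
  rw [colorCount, filter_union, card_union_of_disjoint (disjoint_filter_filter h)]
  rfl

lemma colorCount_sdiff {S T : Finset A} (h : T ⊆ S) (c : ℕ) :
    colorCount col (S \ T) c = colorCount col S c - colorCount col T c := by
  have := colorCount_union (col := col) (disjoint_sdiff (s := T) (t := S)) c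
  rw [union_sdiff_of_subset h] at this
  omega

theorem movFair_iff {S : Finset A} :
    MovFair col ℓ S ↔ ∀ c, ∃ d ≠ c, colorCount col S c ≤ ℓ + colorCount col S d := by
  set pairs := ((S.image col) ×ˢ (S.image col)).filter fun p : ℕ × ℕ => p.1 ≠ p.2
  set N := pairs.sup fun p => min (colorCount col S p.1) (colorCount col S p.2)
  change (S.image col).sup (colorCount col S) - N ≤ ℓ ↔ _
  rw [tsub_le_iff_left]
  constructor
  · intro h c
    have hc : colorCount col S c ≤ N + ℓ := by
      by_cases hc : c ∈ S.image col
      · exact (Finset.le_sup hc).trans h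
      · rw [← colorCount_pos_iff] at hc
        omega
    rcases pairs.eq_empty_or_nonempty with hp | hp
    · refine ⟨c + 1, by omega, ?_⟩
      simp only [N, hp, sup_empty] at hc
      exact hc.trans (by simp)
    · obtain ⟨p, hp, hsup⟩ := exists_mem_eq_sup pairs hp
        fun p => min (colorCount col S p.1) (colorCount col S p.2)
      have hne := (mem_filter.1 hp).2
      rw [show N = _ from hsup] at hc
      by_cases h1 : p.1 = c
      · exact ⟨p.2, fun h => hne (h1.trans h.symm), by omega⟩
      · exact ⟨p.1, h1, by omega⟩
  · intro h
    refine Finset.sup_le fun c hc => ?_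
    obtain ⟨d, hdc, hd⟩ := h c
    by_cases hdS : d ∈ S.image col
    · have hpair : (c, d) ∈ pairs := mem_filter.2 ⟨mem_product.2 ⟨hc, hdS⟩, hdc.symm⟩
      have : min (colorCount col S c) (colorCount col S d) ≤ N :=
        Finset.le_sup (f := fun p => min (colorCount col S p.1) (colorCount col S p.2)) hpair
      omega
    · rw [← colorCount_pos_iff] at hdS
      omega

lemma movFair_iff_movBounded_one {S : Finset A} : MovFair col ℓ S ↔ MovBounded col ℓ 1 S := by
  rw [movFair_iff, movBounded_one_iff]

lemma MovBounded.union {k k' : ℕ} {S T : Finset A} (hS : MovBounded col ℓ k S)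
    (hT : MovBounded col ℓ k' T) (h : Disjoint S T) : MovBounded col ℓ (k + k') (S ∪ T) := by
  intro c
  obtain ⟨D, hD, hcD, hSc⟩ := hS c
  obtain ⟨D', hD', hcD', hTc⟩ := hT c
  refine ⟨D ∪ D', (card_union_le _ _).trans (by omega), by simp [hcD, hcD'], ?_⟩
  have h₁ := sum_le_sum_of_subset (f := colorCount col S) (subset_union_left : D ⊆ D ∪ D')
  have h₂ := sum_le_sum_of_subset (f := colorCount col T) (subset_union_right : D' ⊆ D ∪ D')
  simp only [colorCount_union h, sum_add_distrib, mul_add]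
  omega

theorem exists_subset_movBounded_sdiff {k : ℕ} {S : Finset A}
    (hS : MovBounded col ℓ (k + 1) S) :
    ∃ T ⊆ S, MovBounded col ℓ 1 (S \ T) ∧ MovBounded col ℓ k T := by
  by_cases hfair : MovBounded col ℓ 1 S
  · exact ⟨∅, empty_subset _, by simpa using hfair, movBounded_empty k⟩
  obtain ⟨m, hm⟩ : ∃ m, ∀ d ≠ m, ℓ + colorCount col S d < colorCount col S m := by
    simpa [movBounded_one_iff] using hfair
  obtain ⟨c₁, hc₁m, hc₁⟩ := exists_colorCount_le_of_ne S m
  have hmc₁ := hm c₁ hc₁m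
  set t := colorCount col S c₁
  set r := colorCount col S m - ℓ - t
  obtain ⟨T, hTS, hT⟩ := exists_subset_colorCount_eq (col := col) S
    (fun c => if c = m then r else if c = c₁ then 0 else min (colorCount col S c) r)
    (fun c => by split_ifs with h <;> first | (subst h; omega) | omega)
  refine ⟨T, hTS, movBounded_one_iff.2 fun c => ?_, ?_⟩
  · simp only [colorCount_sdiff hTS, hT]
    by_cases hcm : c = m
    · subst hcm
      refine ⟨c₁, hc₁m, ?_⟩
      simp only [if_pos, if_neg hc₁m]
      omega
    · refine ⟨m, Ne.symm hcm, ?_⟩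
      have := hc₁ c hcm
      simp only [if_pos, if_neg hcm]
      split_ifs <;> omega
  · obtain ⟨D, hD, hmD, hSm⟩ := hS m
    obtain ⟨D', hD'D, hD', hsum⟩ := exists_subset_erase_sum_le (colorCount col S) hD c₁
      fun d hd => hc₁ d (ne_of_mem_of_not_mem hd hmD)
    have hmD' : m ∉ D' := fun h => hmD (mem_of_mem_erase (hD'D h))
    refine movBounded_of_forall_le (m := m) (fun c => ?_) D' hD' hmD' ?_
    · rw [hT, hT]
      split_ifs with h <;> first | (subst h; omega) | omega
    · have hD'T : ∑ d ∈ D', colorCount col T d = ∑ d ∈ D', min (colorCount col S d) r :=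
        sum_congr rfl fun d hd => by
          rw [hT, if_neg (ne_of_mem_of_not_mem hd hmD'), if_neg (ne_of_mem_erase (hD'D hd))]
      rw [hT, if_pos rfl, hD'T]
      exact le_add_sum_min_of_le _ (by rw [mul_add] at hSm; omega)

theorem exists_movFair_partition_iff {k : ℕ} {S : Finset A} :
    (∃ P : Fin k → Finset A,
        (∀ i j, i ≠ j → Disjoint (P i) (P j)) ∧
        Finset.univ.biUnion P = S ∧
        ∀ j, MovFair col ℓ (P j))
      ↔ MovBounded col ℓ k S := by
  simp only [movFair_iff_movBounded_one]
  induction k generalizing S with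
  | zero =>
    constructor
    · rintro ⟨P, -, rfl, -⟩
      simpa using movBounded_empty 0
    · intro h
      exact ⟨Fin.elim0, fun i => i.elim0, by simp [eq_empty_of_movBounded_zero h],
        fun j => j.elim0⟩
  | succ k ih =>
    constructor
    · rintro ⟨P, hdisj, rfl, hP⟩
      have hsplit : univ.biUnion P = P 0 ∪ univ.biUnion (fun i : Fin k => P i.succ) := by
        ext a
        simp [Fin.exists_fin_succ]
      have hrest := ih.1 ⟨_, fun i j hij => hdisj _ _ ((Fin.succ_injective _).ne hij), rfl,
        fun j => hP _⟩
      have := (hP 0).union hrest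
        ((disjoint_biUnion_right _ _ _).2 fun i _ => hdisj 0 i.succ (Fin.succ_ne_zero i).symm)
      rw [hsplit]
      rwa [add_comm] at this
    · intro h
      obtain ⟨T, hTS, hST, hT⟩ := exists_subset_movBounded_sdiff h
      obtain ⟨Q, hQdisj, rfl, hQ⟩ := ih.2 hT
      refine ⟨Fin.cons (S \ univ.biUnion Q) Q, fun i j hij => ?_, ?_, Fin.cases hST hQ⟩
      · cases i using Fin.cases <;> cases j using Fin.cases
        · exact absurd rfl hij
        · exact disjoint_sdiff_self_left.mono_right (subset_biUnion_of_mem Q (mem_univ _))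
        · exact (disjoint_sdiff_self_left.mono_right (subset_biUnion_of_mem Q (mem_univ _))).symm
        · exact hQdisj _ _ fun h => hij (congrArg Fin.succ h)
      · ext a
        have hQS : ∀ i, a ∈ Q i → a ∈ S := fun i hi =>
          hTS (mem_biUnion.2 ⟨i, mem_univ _, hi⟩)
        simp only [mem_biUnion, mem_univ, true_and, Fin.exists_fin_succ, Fin.cons_zero,
          Fin.cons_succ, mem_sdiff]
        grind

end

/-- On a complete bipartite graph with `k` right vertices, a partition of
`U` into `k` (possibly empty) MoV-`ℓ`-fair parts exists iff
`|U_{c_1}| ≤ ℓk + ∑_{i∈[k]} |U_{c_{i+1}}|`, where colors (indexed by ℕ) are ordered by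
decreasing multiplicity. -/
theorem stmt11 {A : Type*} [DecidableEq A]
    (U : Finset A) (col : A → ℕ)
    (cnt : ℕ → ℕ) (hcnt : ∀ i, cnt i = (U.filter fun a => col a = i).card)
    (hord : ∀ i, cnt (i + 1) ≤ cnt i)
    (k ℓ : ℕ) :
    (∃ P : Fin k → Finset A,
        (∀ i j, i ≠ j → Disjoint (P i) (P j)) ∧
        Finset.univ.biUnion P = U ∧
        ∀ j, MovFair col ℓ (P j))
      ↔ cnt 0 ≤ ℓ * k + ∑ i ∈ Finset.range k, cnt (i + 1) := by
  have hanti : Antitone cnt := antitone_nat_of_succ_le hord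
  have hcol : colorCount col U = cnt := funext fun i => (hcnt i).symm
  rw [exists_movFair_partition_iff]
  constructor
  · intro h
    obtain ⟨D, hD, h0D, h0⟩ := h 0
    rw [hcol] at h0
    calc cnt 0 ≤ ℓ * k + ∑ d ∈ D, cnt d := h0
      _ ≤ ℓ * k + ∑ i ∈ range #D, cnt (1 + i) := by
        gcongr
        exact sum_le_sum_range_of_antitone hanti D fun d hd =>
          Nat.pos_of_ne_zero (ne_of_mem_of_not_mem hd h0D)
      _ ≤ ℓ * k + ∑ i ∈ range k, cnt (i + 1) := by
        simp only [add_comm 1]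
        gcongr
  · intro h
    refine movBounded_of_forall_le (m := 0) (fun c => ?_) (Ico 1 (k + 1)) (by simp) (by simp) ?_
    · rw [hcol]
      exact hanti (Nat.zero_le c)
    · rw [hcol, sum_Ico_eq_sum_range]
      simpa [add_comm] using h
end

section
/- Max-Min Fair Matching on complete bipartite graphs: Let U be a finite set of vertices colored with colors c_1, …, c_{|C|} ordered so that |U_{c_1}| ≥ … ≥ |U_{c_{|C|}}|, let k ≥ 1 and ℓ ∈ ℕ. There is a partition of U into k labeled (possibly empty) parts each of which is ℓ-fair with respect to Max-Min (i.e., in each part the count of the most frequent color exceeds the count of the least frequent color by at most ℓ) if and only if |U_{c_1}| ≤ ℓ·k + |U_{c_{|C|}}|. -/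
/-!
Summing, over the parts, the fairness inequality between the most and the least frequent color
gives necessity. Conversely, number each color class `0, 1, …` and put the element numbered `i`
into part `i % k`. A color class of size `n` then contributes `#{i < n | i ≡ j [MOD k]}` elements
to part `j`; this is monotone in `n` and grows by exactly `ℓ` when `n` grows by `ℓ * k`.
-/

open Finset

namespace Finset

lemma sup_tsub_inf'_le_iff {ι : Type*} (s : Finset ι) (hs : s.Nonempty) (g : ι → ℕ) (ℓ : ℕ) :
    s.sup g - s.inf' hs g ≤ ℓ ↔ ∀ i ∈ s, ∀ j ∈ s, g i ≤ g j + ℓ := by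
  rw [tsub_le_iff_right, Finset.sup_le_iff]
  refine forall₂_congr fun i _ => ?_
  rw [← tsub_le_iff_left, le_inf'_iff]
  exact forall₂_congr fun j _ => tsub_le_iff_right

lemma card_filter_biUnion_eq_sum {ι α : Type*} [Fintype ι] [DecidableEq α] (P : ι → Finset α)
    (hP : ∀ i j, i ≠ j → Disjoint (P i) (P j)) (p : α → Prop) [DecidablePred p] :
    #{a ∈ univ.biUnion P | p a} = ∑ i, #{a ∈ P i | p a} := by
  rw [filter_biUnion, card_biUnion]
  exact fun i _ j _ hij => (hP i j hij).mono (filter_subset _ _) (filter_subset _ _)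

lemma exists_bijOn_range {α : Type*} (s : Finset α) : ∃ f : α → ℕ, Set.BijOn f s (range #s) := by
  classical
  refine ⟨fun a => if h : a ∈ s then s.equivFin ⟨a, h⟩ else 0, fun a ha => ?_, fun a ha b hb hab => ?_,
    fun n hn => ?_⟩
  · simp [mem_coe.1 ha]
  · simp only [mem_coe.1 ha, mem_coe.1 hb, dif_pos, Fin.val_inj] at hab
    simpa using hab
  · have hn : n < #s := by simpa using hn
    exact ⟨s.equivFin.symm ⟨n, hn⟩, by simp, by simp⟩

lemma exists_bijOn_range_of_fiber {α β : Type*} [DecidableEq β] (s : Finset α) (g : α → β) :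
    ∃ f : α → ℕ, ∀ b, Set.BijOn f ({a ∈ s | g a = b} : Finset α) (range #{a ∈ s | g a = b}) := by
  choose F hF using fun b => exists_bijOn_range {a ∈ s | g a = b}
  refine ⟨fun a => F (g a) a, fun b => (hF b).congr fun a ha => ?_⟩
  rw [(mem_filter.1 ha).2]

lemma card_filter_comp_eq_count {α : Type*} {s : Finset α} {f : α → ℕ} {n : ℕ}
    (hf : Set.BijOn f s (range n)) (p : ℕ → Prop) [DecidablePred p] :
    #{a ∈ s | p (f a)} = n.count p := by
  rw [Nat.count_eq_card_filter_range]
  refine card_nbij f (fun a ha => ?_) (hf.injOn.mono fun a ha => ?_) fun x hx => ?_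
  · simp only [coe_filter, Set.mem_ofPred_eq] at ha ⊢
    exact ⟨hf.mapsTo ha.1, ha.2⟩
  · exact (mem_filter.1 ha).1
  · simp only [coe_filter, Set.mem_ofPred_eq] at hx
    obtain ⟨a, ha, rfl⟩ := hf.surjOn hx.1
    exact ⟨a, by simpa using And.intro ha hx.2, rfl⟩

end Finset

lemma Nat.count_modEq_add_mul {k : ℕ} (hk : 0 < k) (n ℓ j : ℕ) :
    (n + ℓ * k).count (· ≡ j [MOD k]) = n.count (· ≡ j [MOD k]) + ℓ := by
  rw [Nat.count_modEq_card _ hk, Nat.count_modEq_card _ hk, Nat.add_mul_mod_self_right,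
    Nat.add_mul_div_right _ _ hk]
  omega

section FairPartition

variable {A C : Type*} [DecidableEq A] [DecidableEq C] (U : Finset A) (col : A → C) {k ℓ : ℕ}

lemma card_filter_le_add_mul_of_partition (P : Fin k → Finset A)
    (hdisj : ∀ i j, i ≠ j → Disjoint (P i) (P j)) (hU : univ.biUnion P = U)
    (hfair : ∀ j c c', #{a ∈ P j | col a = c} ≤ #{a ∈ P j | col a = c'} + ℓ) (c c' : C) :
    #{a ∈ U | col a = c} ≤ #{a ∈ U | col a = c'} + ℓ * k := by
  subst hU
  calc #{a ∈ univ.biUnion P | col a = c}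
      = ∑ j, #{a ∈ P j | col a = c} := card_filter_biUnion_eq_sum P hdisj _
    _ ≤ ∑ j, (#{a ∈ P j | col a = c'} + ℓ) := sum_le_sum fun j _ => hfair j c c'
    _ = #{a ∈ univ.biUnion P | col a = c'} + ℓ * k := by
      rw [sum_add_distrib, card_filter_biUnion_eq_sum P hdisj, sum_const, card_univ,
        Fintype.card_fin, smul_eq_mul, mul_comm]

lemma exists_partition_of_card_filter_le_add_mul (hk : 0 < k)
    (hU : ∀ c c', #{a ∈ U | col a = c} ≤ #{a ∈ U | col a = c'} + ℓ * k) :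
    ∃ P : Fin k → Finset A, (∀ i j, i ≠ j → Disjoint (P i) (P j)) ∧ univ.biUnion P = U ∧
      ∀ j c c', #{a ∈ P j | col a = c} ≤ #{a ∈ P j | col a = c'} + ℓ := by
  obtain ⟨f, hf⟩ := exists_bijOn_range_of_fiber U col
  refine ⟨fun j => {a ∈ U | f a ≡ j [MOD k]}, fun i j hij => ?_, ?_, fun j c c' => ?_⟩
  · refine disjoint_left.2 fun a hi hj => hij (Fin.ext ?_)
    exact ((mem_filter.1 hi).2.symm.trans (mem_filter.1 hj).2).eq_of_lt_of_lt i.isLt j.isLt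
  · ext a
    simp only [mem_biUnion, mem_univ, mem_filter, true_and]
    exact ⟨fun ⟨_, ha, _⟩ => ha, fun ha => ⟨⟨f a % k, Nat.mod_lt _ hk⟩, ha, (Nat.mod_modEq _ _).symm⟩⟩
  · have hcount : ∀ c, #{a ∈ {a ∈ U | f a ≡ j [MOD k]} | col a = c}
        = (#{a ∈ U | col a = c}).count (· ≡ j [MOD k]) := fun c => by
      rw [← card_filter_comp_eq_count (hf c), filter_filter, filter_filter]
      simp only [and_comm]
    rw [hcount, hcount, ← Nat.count_modEq_add_mul hk]
    exact Nat.count_monotone _ (hU c c')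

theorem exists_partition_iff_card_filter_le_add_mul (hk : 0 < k) :
    (∃ P : Fin k → Finset A, (∀ i j, i ≠ j → Disjoint (P i) (P j)) ∧ univ.biUnion P = U ∧
      ∀ j c c', #{a ∈ P j | col a = c} ≤ #{a ∈ P j | col a = c'} + ℓ) ↔
    ∀ c c', #{a ∈ U | col a = c} ≤ #{a ∈ U | col a = c'} + ℓ * k :=
  ⟨fun ⟨P, hdisj, hU, hfair⟩ => card_filter_le_add_mul_of_partition U col P hdisj hU hfair,
    exists_partition_of_card_filter_le_add_mul U col hk⟩

end FairPartition

/-- On a complete bipartite graph with `k ≥ 1` right vertices, a partition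
of `U` into `k` labeled (possibly empty) Max-Min-`ℓ`-fair parts exists iff
`|U_{c_1}| ≤ ℓk + |U_{c_{|C|}}|`, where the colors `Fin m` are ordered by decreasing
multiplicity and the minimum in Max-Min ranges over all colors of `C`. -/
theorem stmt13 {A : Type*} [DecidableEq A] {m : ℕ} (hm : 0 < m)
    (U : Finset A) (col : A → Fin m)
    (cnt : Fin m → ℕ) (hcnt : ∀ c, cnt c = (U.filter fun a => col a = c).card)
    (hord : ∀ c c' : Fin m, c ≤ c' → cnt c' ≤ cnt c)
    (k ℓ : ℕ) (hk : 0 < k) :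
    (∃ P : Fin k → Finset A,
        (∀ i j, i ≠ j → Disjoint (P i) (P j)) ∧
        Finset.univ.biUnion P = U ∧
        ∀ j, (Finset.univ.sup fun c : Fin m => ((P j).filter fun a => col a = c).card)
            - (Finset.univ.inf'
                (Finset.univ_nonempty_iff.mpr (Fin.pos_iff_nonempty.mp hm))
                fun c : Fin m => ((P j).filter fun a => col a = c).card) ≤ ℓ)
      ↔ cnt ⟨0, hm⟩ ≤ ℓ * k + cnt ⟨m - 1, Nat.sub_lt hm Nat.one_pos⟩ := by
  simp only [sup_tsub_inf'_le_iff, mem_univ, true_implies]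
  rw [exists_partition_iff_card_filter_le_add_mul U col hk]
  simp only [← hcnt]
  refine ⟨fun h => by linarith [h ⟨0, hm⟩ ⟨m - 1, Nat.sub_lt hm Nat.one_pos⟩], fun h c c' => ?_⟩
  have hfirst := hord ⟨0, hm⟩ c (Fin.mk_le_mk.2 (Nat.zero_le _))
  have hlast := hord c' ⟨m - 1, Nat.sub_lt hm Nat.one_pos⟩ (Fin.mk_le_mk.2 (by omega))
  omega
end

section
/- Max-Min Fair Matching on complete bipartite graphs with non-emptiness: With colored vertex set U (|U_{c_1}| ≥ … ≥ |U_{c_{|C|}}|), n = |U|, k parts, and threshold ℓ, there is a partition of U into k nonempty parts each ℓ-fair w.r.t. Max-Min if and only if |U_{c_1}| ≤ ℓ·k + |U_{c_{|C|}}| and, in addition, either ℓ > 0 and n ≥ k, or ℓ = 0 and |U_{c_1}| ≥ k. -/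
/-! Necessity: summing `|P_j ∩ U_{c_1}| ≤ ℓ + |P_j ∩ U_{c_{|C|}}|` over the `k` parts gives the
balance condition, and the parts are disjoint and nonempty; when `ℓ = 0` a nonempty part contains
every color, in particular `c_1`.

Sufficiency: if `|U_{c_1}| ≥ k`, deal each color class round-robin to the parts `0, 1, 2, …`.
Part `j` then receives `#{i < |U_c| | i ≡ j [MOD k]}` vertices of color `c`; this count is monotone
in `|U_c|`, grows by exactly `ℓ` when `|U_c|` grows by `ℓk`, and is positive once `|U_c| ≥ k`.
Otherwise every color class has fewer than `k` vertices: list `U` color by color and deal the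
whole list round-robin. A color class is then a block of fewer than `k` consecutive positions, so
each part gets at most one vertex of each color, and every part is hit because `n ≥ k`. -/

open Finset

lemma Finset.sup_sub_inf'_le_iff {ι : Type*} {s : Finset ι} (hs : s.Nonempty) (f : ι → ℕ)
    (ℓ : ℕ) : s.sup f - s.inf' hs f ≤ ℓ ↔ ∀ i ∈ s, ∀ j ∈ s, f i ≤ ℓ + f j := by
  constructor
  · intro h i hi j hj
    have := le_sup (f := f) hi
    have := inf'_le f hj
    omega
  · intro h
    obtain ⟨i, hi, hi_eq⟩ := exists_mem_eq_sup s hs f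
    obtain ⟨j, hj, hj_eq⟩ := exists_mem_eq_inf' hs f
    rw [hi_eq, hj_eq]
    have := h i hi j hj
    omega

lemma Finset.exists_bijOn_range_s14 {A : Type*} (s : Finset A) :
    ∃ f : A → ℕ, Set.BijOn f s (range #s) :=
  s.finite_toSet.exists_bijOn_of_encard_eq <| by
    rw [Set.encard_coe_eq_coe_finsetCard, Set.encard_coe_eq_coe_finsetCard, card_range]

lemma Set.BijOn.card_filter_comp {α β : Type*} {s : Finset α} {t : Finset β} {f : α → β}
    (hf : Set.BijOn f s t) (p : β → Prop) [DecidablePred p] :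
    #{a ∈ s | p (f a)} = #{b ∈ t | p b} := by
  refine card_nbij f (fun a ha => ?_) (hf.injOn.mono (Finset.coe_subset.2 (filter_subset _ _)))
    fun b hb => ?_
  · simp only [coe_filter, Set.mem_ofPred_eq] at ha ⊢
    exact ⟨hf.mapsTo ha.1, ha.2⟩
  · simp only [coe_filter, Set.mem_ofPred_eq] at hb
    obtain ⟨a, ha, rfl⟩ := hf.surjOn hb.1
    exact ⟨a, by simpa using ⟨ha, hb.2⟩, rfl⟩

namespace Nat

lemma count_modEq_add_mul_s14 {k : ℕ} (hk : 0 < k) (j N ℓ : ℕ) :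
    count (· ≡ j [MOD k]) (N + ℓ * k) = count (· ≡ j [MOD k]) N + ℓ := by
  rw [count_modEq_card _ hk, count_modEq_card _ hk, add_mul_div_right _ _ hk,
    add_mul_mod_self_right]
  ring

lemma count_modEq_le_add_of_le {k : ℕ} (hk : 0 < k) (j : ℕ) {N M ℓ : ℕ} (h : N ≤ ℓ * k + M) :
    count (· ≡ j [MOD k]) N ≤ ℓ + count (· ≡ j [MOD k]) M := by
  calc count (· ≡ j [MOD k]) N ≤ count (· ≡ j [MOD k]) (M + ℓ * k) := count_monotone _ (by omega)
    _ = ℓ + count (· ≡ j [MOD k]) M := by rw [count_modEq_add_mul_s14 hk, add_comm]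

lemma count_modEq_pos {k N : ℕ} (hk : 0 < k) (hN : k ≤ N) (j : ℕ) :
    0 < count (· ≡ j [MOD k]) N := by
  rw [count_modEq_card _ hk]
  exact Nat.add_pos_left (Nat.div_pos hN hk) _

end Nat

section Necessity

variable {A C ι : Type*} [DecidableEq A] [Fintype ι] [DecidableEq C] {P : ι → Finset A}
  {col : A → C}

lemma card_filter_biUnion_eq_sum (hP : ∀ i j, i ≠ j → Disjoint (P i) (P j))
    (p : A → Prop) [DecidablePred p] :
    #{a ∈ univ.biUnion P | p a} = ∑ i, #{a ∈ P i | p a} := by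
  rw [filter_biUnion, card_biUnion fun i _ j _ hij =>
    (hP i j hij).mono (filter_subset _ _) (filter_subset _ _)]

lemma card_color_le_mul_add_of_fair (hP : ∀ i j, i ≠ j → Disjoint (P i) (P j)) {ℓ : ℕ}
    {c c' : C} (hfair : ∀ i, #{a ∈ P i | col a = c} ≤ ℓ + #{a ∈ P i | col a = c'}) :
    #{a ∈ univ.biUnion P | col a = c}
      ≤ ℓ * Fintype.card ι + #{a ∈ univ.biUnion P | col a = c'} := by
  rw [card_filter_biUnion_eq_sum hP, card_filter_biUnion_eq_sum hP]
  calc ∑ i, #{a ∈ P i | col a = c} ≤ ∑ i, (ℓ + #{a ∈ P i | col a = c'}) :=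
        sum_le_sum fun i _ => hfair i
    _ = _ := by rw [sum_add_distrib, sum_const, card_univ, smul_eq_mul, mul_comm]

lemma card_le_card_color_of_zero_fair (hP : ∀ i j, i ≠ j → Disjoint (P i) (P j))
    (hne : ∀ i, (P i).Nonempty)
    (hfair : ∀ i c c', #{a ∈ P i | col a = c} ≤ #{a ∈ P i | col a = c'}) (c : C) :
    Fintype.card ι ≤ #{a ∈ univ.biUnion P | col a = c} := by
  rw [filter_biUnion, ← card_univ]
  refine card_le_card_biUnion (fun i _ j _ hij => (hP i j hij).mono (filter_subset _ _)
    (filter_subset _ _)) fun i _ => card_pos.1 ?_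
  obtain ⟨a, ha⟩ := hne i
  have := hfair i (col a) c
  have : 0 < #{x ∈ P i | col x = col a} := card_pos.2 ⟨a, mem_filter.2 ⟨ha, rfl⟩⟩
  omega

end Necessity

section RoundRobin

variable {A C : Type*} [DecidableEq C] (col : A → C) (U : Finset A) {k : ℕ}

lemma exists_roundRobin_assignment (hk : 0 < k) :
    ∃ π : A → Fin k, ∀ (j : Fin k) c, #{a ∈ {a ∈ U | π a = j} | col a = c}
      = Nat.count (· ≡ j [MOD k]) #{a ∈ U | col a = c} := by
  choose f hf using fun c => exists_bijOn_range_s14 {a ∈ U | col a = c}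
  refine ⟨fun a => ⟨f (col a) a % k, Nat.mod_lt _ hk⟩, fun j c => ?_⟩
  rw [Nat.count_eq_card_filter_range, ← (hf c).card_filter_comp]
  congr 1
  ext a
  simp only [mem_filter, Fin.ext_iff, Nat.ModEq, Nat.mod_eq_of_lt j.2]
  constructor
  · rintro ⟨⟨ha, hj⟩, rfl⟩
    exact ⟨⟨ha, rfl⟩, hj⟩
  · rintro ⟨⟨ha, rfl⟩, hj⟩
    exact ⟨⟨ha, hj⟩, rfl⟩

lemma exists_fair_assignment_of_le_card (hk : 0 < k) {ℓ : ℕ} {cmax cmin : C}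
    (hmax : ∀ c, #{a ∈ U | col a = c} ≤ #{a ∈ U | col a = cmax})
    (hmin : ∀ c, #{a ∈ U | col a = cmin} ≤ #{a ∈ U | col a = c})
    (hbal : #{a ∈ U | col a = cmax} ≤ ℓ * k + #{a ∈ U | col a = cmin})
    (hbig : k ≤ #{a ∈ U | col a = cmax}) :
    ∃ π : A → Fin k, (∀ j, ∃ a ∈ U, π a = j) ∧ ∀ j c c',
      #{a ∈ {a ∈ U | π a = j} | col a = c} ≤ ℓ + #{a ∈ {a ∈ U | π a = j} | col a = c'} := by
  obtain ⟨π, hπ⟩ := exists_roundRobin_assignment col U hk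
  refine ⟨π, fun j => ?_, fun j c c' => ?_⟩
  · obtain ⟨a, ha⟩ := card_pos.1 ((hπ j cmax).symm ▸ Nat.count_modEq_pos hk hbig j)
    exact ⟨a, mem_filter.1 (mem_filter.1 ha).1⟩
  · rw [hπ, hπ]
    calc _ ≤ Nat.count (· ≡ j [MOD k]) #{a ∈ U | col a = cmax} := Nat.count_monotone _ (hmax c)
      _ ≤ ℓ + Nat.count (· ≡ j [MOD k]) #{a ∈ U | col a = cmin} :=
        Nat.count_modEq_le_add_of_le hk j hbal
      _ ≤ _ := Nat.add_le_add_left (Nat.count_monotone _ (hmin c')) ℓ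

end RoundRobin

section ColorMajor

variable {A C : Type*} [LinearOrder C] (col : A → C) (U : Finset A) {k : ℕ}

lemma card_filter_lt_add_card_filter_eq (c : C) :
    #{a ∈ U | col a < c} + #{a ∈ U | col a = c} = #{a ∈ U | col a ≤ c} := by
  rw [← card_filter_add_card_filter_not (s := {a ∈ U | col a ≤ c}) fun a => col a < c,
    filter_filter, filter_filter]
  congr 2 <;> ext a <;> simp only [mem_filter] <;> grind

lemma exists_surjective_assignment_card_color_le_one (hk : 0 < k)
    (hsmall : ∀ c, #{a ∈ U | col a = c} < k) (hn : k ≤ #U) :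
    ∃ π : A → Fin k, (∀ j, ∃ a ∈ U, π a = j) ∧ ∀ j c, #{a ∈ {a ∈ U | π a = j} | col a = c} ≤ 1 := by
  choose f hf using fun c => exists_bijOn_range_s14 {a ∈ U | col a = c}
  set pos : A → ℕ := fun a => #{x ∈ U | col x < col a} + f (col a) a with hpos
  have hf_lt : ∀ a ∈ U, f (col a) a < #{x ∈ U | col x = col a} := fun a ha =>
    mem_range.1 ((hf (col a)).mapsTo (by simp [ha]))
  have pos_lt : ∀ a ∈ U, pos a < #{x ∈ U | col x ≤ col a} := by
    intro a ha
    rw [← card_filter_lt_add_card_filter_eq]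
    have := hf_lt a ha
    simp only [hpos]
    omega
  have pos_lt_pos : ∀ a ∈ U, ∀ b ∈ U, col a < col b → pos a < pos b := fun a ha b hb h =>
    (pos_lt a ha).trans_le ((card_le_card fun x => by
      simpa only [mem_filter] using And.imp_right fun hx => lt_of_le_of_lt hx h).trans
        (Nat.le_add_right _ _))
  have pos_inj : Set.InjOn pos U := by
    intro a ha b hb h
    rw [mem_coe] at ha hb
    rcases lt_trichotomy (col a) (col b) with hab | hab | hab
    · exact absurd h (pos_lt_pos a ha b hb hab).ne
    · have : f (col a) a = f (col a) b := by simp only [hpos, hab] at h ⊢; omega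
      exact (hf (col a)).injOn (by simp [ha]) (by simp [hb, hab]) this
    · exact absurd h (pos_lt_pos b hb a ha hab).ne'
  have pos_surj : Set.SurjOn pos U (range #U) :=
    surjOn_of_injOn_of_card_le pos (fun a ha => mem_range.2 ((pos_lt a ha).trans_le
      (card_filter_le _ _))) pos_inj (card_range _).le
  refine ⟨fun a => ⟨pos a % k, Nat.mod_lt _ hk⟩, fun j => ?_, fun j c => card_le_one.2 ?_⟩
  · obtain ⟨a, ha, hja⟩ := pos_surj (mem_range.2 (j.2.trans_le hn))
    exact ⟨a, ha, Fin.ext (by simp [hja, Nat.mod_eq_of_lt j.2])⟩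
  · intro a ha b hb
    simp only [mem_filter, Fin.ext_iff] at ha hb
    obtain ⟨⟨ha, hja⟩, rfl⟩ := ha
    obtain ⟨⟨hb, hjb⟩, hcol⟩ := hb
    have hmod : pos a ≡ pos b [MOD k] := hja.trans hjb.symm
    simp only [hpos, hcol] at hmod
    refine (hf (col a)).injOn (by simp [ha]) (by simp [hb, hcol]) ?_
    exact (Nat.ModEq.add_left_cancel' _ hmod).eq_of_lt_of_lt
      ((hf_lt a ha).trans (hsmall _)) ((hcol ▸ hf_lt b hb).trans (hsmall _))

lemma exists_fair_assignment (hk : 0 < k) {ℓ : ℕ} {cmax cmin : C}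
    (hmax : ∀ c, #{a ∈ U | col a = c} ≤ #{a ∈ U | col a = cmax})
    (hmin : ∀ c, #{a ∈ U | col a = cmin} ≤ #{a ∈ U | col a = c})
    (hbal : #{a ∈ U | col a = cmax} ≤ ℓ * k + #{a ∈ U | col a = cmin})
    (hsize : (0 < ℓ ∧ k ≤ #U) ∨ (ℓ = 0 ∧ k ≤ #{a ∈ U | col a = cmax})) :
    ∃ π : A → Fin k, (∀ j, ∃ a ∈ U, π a = j) ∧ ∀ j c c',
      #{a ∈ {a ∈ U | π a = j} | col a = c} ≤ ℓ + #{a ∈ {a ∈ U | π a = j} | col a = c'} := by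
  by_cases hbig : k ≤ #{a ∈ U | col a = cmax}
  · exact exists_fair_assignment_of_le_card col U hk hmax hmin hbal hbig
  obtain ⟨hℓ, hn⟩ : 0 < ℓ ∧ k ≤ #U := by omega
  obtain ⟨π, hsurj, hle⟩ := exists_surjective_assignment_card_color_le_one col U hk
    (fun c => (hmax c).trans_lt (by omega)) hn
  exact ⟨π, hsurj, fun j c c' => (hle j c).trans (by omega)⟩

end ColorMajor

/-- With the non-emptiness constraint, a partition of `U` into `k`
nonempty Max-Min-`ℓ`-fair parts exists iff `|U_{c_1}| ≤ ℓk + |U_{c_{|C|}}|` and, in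
addition, either `ℓ > 0` and `n ≥ k`, or `ℓ = 0` and `|U_{c_1}| ≥ k`. -/
theorem stmt14 {A : Type*} [DecidableEq A] {m : ℕ} (hm : 0 < m)
    (U : Finset A) (col : A → Fin m)
    (cnt : Fin m → ℕ) (hcnt : ∀ c, cnt c = (U.filter fun a => col a = c).card)
    (hord : ∀ c c' : Fin m, c ≤ c' → cnt c' ≤ cnt c)
    (k ℓ : ℕ) (hk : 0 < k) :
    (∃ P : Fin k → Finset A,
        (∀ i j, i ≠ j → Disjoint (P i) (P j)) ∧
        Finset.univ.biUnion P = U ∧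
        (∀ j, (P j).Nonempty) ∧
        ∀ j, (Finset.univ.sup fun c : Fin m => ((P j).filter fun a => col a = c).card)
            - (Finset.univ.inf'
                (Finset.univ_nonempty_iff.mpr (Fin.pos_iff_nonempty.mp hm))
                fun c : Fin m => ((P j).filter fun a => col a = c).card) ≤ ℓ)
      ↔ (cnt ⟨0, hm⟩ ≤ ℓ * k + cnt ⟨m - 1, Nat.sub_lt hm Nat.one_pos⟩ ∧
          ((0 < ℓ ∧ k ≤ U.card) ∨ (ℓ = 0 ∧ k ≤ cnt ⟨0, hm⟩))) := by
  obtain rfl : cnt = fun c => #{a ∈ U | col a = c} := funext hcnt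
  have hmax : ∀ c, #{a ∈ U | col a = c} ≤ #{a ∈ U | col a = ⟨0, hm⟩} := fun c =>
    hord _ _ (Fin.le_def.2 (Nat.zero_le _))
  have hmin : ∀ c, #{a ∈ U | col a = ⟨m - 1, Nat.sub_lt hm Nat.one_pos⟩}
      ≤ #{a ∈ U | col a = c} := fun c => hord _ _ (Fin.le_def.2 (Nat.le_sub_one_of_lt c.2))
  simp only [sup_sub_inf'_le_iff, mem_univ, forall_const]
  constructor
  · rintro ⟨P, hdisj, rfl, hne, hfair⟩
    refine ⟨by simpa using card_color_le_mul_add_of_fair hdisj fun j => hfair j _ _, ?_⟩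
    rcases Nat.eq_zero_or_pos ℓ with rfl | hℓ
    · refine Or.inr ⟨rfl, ?_⟩
      simpa using card_le_card_color_of_zero_fair hdisj hne
        (fun j c c' => by simpa using hfair j c c') _
    · refine Or.inl ⟨hℓ, ?_⟩
      simpa using card_le_card_biUnion (s := univ) (fun i _ j _ hij => hdisj i j hij)
        fun j _ => hne j
  · rintro ⟨hbal, hsize⟩
    obtain ⟨π, hsurj, hfair⟩ := exists_fair_assignment col U hk hmax hmin hbal hsize
    refine ⟨fun j => {a ∈ U | π a = j}, fun i j hij => disjoint_filter.2 fun a _ hi hj =>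
      hij (hi.symm.trans hj), biUnion_filter_eq_of_maps_to fun _ _ => mem_univ _, fun j => ?_,
      hfair⟩
    obtain ⟨a, ha, rfl⟩ := hsurj j
    exact ⟨a, mem_filter.2 ⟨ha, rfl⟩⟩
end

section
/- Round-robin distribution is Max-Min fair: Let U be a finite colored vertex set with |U_{c_1}| ≥ … ≥ |U_{c_{|C|}}| and suppose |U_{c_1}| ≤ ℓ·k + |U_{c_{|C|}}|. If each color class U_c is distributed among k parts as evenly as possible (each part receives either ⌊|U_c|/k⌋ or ⌈|U_c|/k⌉ vertices of color c, assigned in cyclic order starting from part 1), then every resulting part S satisfies max_c |S_c| − min_c |S_c| ≤ ℓ. -/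
/-!
Dealing `n` items cyclically among `k` parts gives part `j` exactly as many items as there are
numbers below `n` congruent to `j` mod `k`; hence a part's share is monotone in `n`, and adding
`ℓ * k` items adds exactly `ℓ` to it. So the share of a part in the largest color class is at most
`ℓ` more than its share in the smallest one, which is at most its share in any color class.
-/

/-- The number of items received by part `j` (counting from `0`) when `n` items are dealt
cyclically among `k` parts. -/
def roundRobinShare (k j n : ℕ) : ℕ := n / k + if j < n % k then 1 else 0

theorem roundRobinShare_eq_count {k j : ℕ} (hj : j < k) (n : ℕ) :
    roundRobinShare k j n = n.count (· ≡ j [MOD k]) := by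
  rw [Nat.count_modEq_card n (Nat.zero_lt_of_lt hj) j, Nat.mod_eq_of_lt hj, roundRobinShare]

theorem roundRobinShare_monotone {k j : ℕ} (hj : j < k) : Monotone (roundRobinShare k j) := by
  simpa only [funext (roundRobinShare_eq_count hj)] using Nat.count_monotone _

theorem roundRobinShare_mul_add {k : ℕ} (hk : 0 < k) (j ℓ n : ℕ) :
    roundRobinShare k j (ℓ * k + n) = ℓ + roundRobinShare k j n := by
  rw [roundRobinShare, roundRobinShare, add_comm (ℓ * k), Nat.add_mul_div_right _ _ hk,
    Nat.add_mul_mod_self_right, add_comm (n / k), add_assoc]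

theorem roundRobinShare_le_add {k j a b ℓ : ℕ} (hj : j < k) (hab : a ≤ ℓ * k + b) :
    roundRobinShare k j a ≤ ℓ + roundRobinShare k j b :=
  (roundRobinShare_monotone hj hab).trans_eq
    (roundRobinShare_mul_add (Nat.zero_lt_of_lt hj) j ℓ b)

theorem Finset.sup_tsub_inf'_le {ι : Type*} {s : Finset ι} (hs : s.Nonempty) {f : ι → ℕ} {ℓ : ℕ}
    (h : ∀ i ∈ s, ∀ i' ∈ s, f i ≤ ℓ + f i') : s.sup f - s.inf' hs f ≤ ℓ := by
  obtain ⟨i', hi', hmin⟩ := s.exists_mem_eq_inf' hs f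
  rw [hmin, tsub_le_iff_left, add_comm]
  exact Finset.sup_le fun i hi => h i hi i' hi'

theorem stmt15_general {A : Type*} [DecidableEq A] {m : ℕ} (hm : 0 < m)
    (col : A → Fin m)
    (cnt : Fin m → ℕ)
    (hord : ∀ c c' : Fin m, c ≤ c' → cnt c' ≤ cnt c)
    (k ℓ : ℕ)
    (hcond : cnt ⟨0, hm⟩ ≤ ℓ * k + cnt ⟨m - 1, Nat.sub_lt hm Nat.one_pos⟩)
    (P : Fin k → Finset A)
    (hP : ∀ (j : Fin k) (c : Fin m),
      ((P j).filter fun a => col a = c).card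
        = cnt c / k + if (j : ℕ) < cnt c % k then 1 else 0) :
    ∀ j : Fin k,
      (Finset.univ.sup fun c : Fin m => ((P j).filter fun a => col a = c).card)
        - (Finset.univ.inf'
            (Finset.univ_nonempty_iff.mpr (Fin.pos_iff_nonempty.mp hm))
            fun c : Fin m => ((P j).filter fun a => col a = c).card) ≤ ℓ := by
  intro j
  refine Finset.sup_tsub_inf'_le _ fun c _ c' _ => ?_
  rw [hP, hP]
  have hc : cnt c ≤ cnt ⟨0, hm⟩ := hord _ _ (Fin.mk_le_of_le_val (Nat.zero_le _))
  have hc' : cnt ⟨m - 1, Nat.sub_lt hm Nat.one_pos⟩ ≤ cnt c' :=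
    hord _ _ (Fin.le_def.mpr (Nat.le_sub_one_of_lt c'.isLt))
  exact roundRobinShare_le_add j.isLt (hc.trans (hcond.trans (Nat.add_le_add_left hc' _)))

/-- Round-robin distribution is Max-Min fair: if
`|U_{c_1}| ≤ ℓk + |U_{c_{|C|}}|` (colors ordered by decreasing multiplicity) and each
color class is distributed cyclically (the first `|U_c| mod k` parts get `⌈|U_c|/k⌉`
vertices of color `c`, the rest get `⌊|U_c|/k⌋`), then every part `S` satisfies
`max_c |S_c| − min_c |S_c| ≤ ℓ`. -/
theorem stmt15 {A : Type*} [DecidableEq A] {m : ℕ} (hm : 0 < m)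
    (U : Finset A) (col : A → Fin m)
    (cnt : Fin m → ℕ) (hcnt : ∀ c, cnt c = (U.filter fun a => col a = c).card)
    (hord : ∀ c c' : Fin m, c ≤ c' → cnt c' ≤ cnt c)
    (k ℓ : ℕ) (hk : 0 < k)
    (hcond : cnt ⟨0, hm⟩ ≤ ℓ * k + cnt ⟨m - 1, Nat.sub_lt hm Nat.one_pos⟩)
    (P : Fin k → Finset A)
    (hP : ∀ (j : Fin k) (c : Fin m),
      ((P j).filter fun a => col a = c).card
        = cnt c / k + if (j : ℕ) < cnt c % k then 1 else 0) :
    ∀ j : Fin k,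
      (Finset.univ.sup fun c : Fin m => ((P j).filter fun a => col a = c).card)
        - (Finset.univ.inf'
            (Finset.univ_nonempty_iff.mpr (Fin.pos_iff_nonempty.mp hm))
            fun c : Fin m => ((P j).filter fun a => col a = c).card) ≤ ℓ :=
  stmt15_general hm col cnt hord k ℓ hcond P hP
end

section
/- Two-sided Hall condition from degree bounds: Let G = (U ⊎ V, E) be a finite bipartite graph admitting a left-perfect many-to-one matching M, and define for each v ∈ V the value z_v = |M(v)|. Then simultaneously Σ_{v∈V} z_v = |U|, and for every W ⊆ V: |ν(W)| ≤ Σ_{v∈W} z_v ≤ |N(W)|. Conversely, any integers z_v ≥ 0 with Σ_{v∈V} z_v = |U| and Σ_{v∈W} z_v ≥ |ν(W)| for all W ⊆ V arise as |M(v)| for some left-perfect many-to-one matching M; moreover in that case Σ_{v∈W} z_v ≤ |N(W)| holds automatically for all W ⊆ V. -/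
/-!
For a left-perfect matching `m`, the fibres `m⁻¹(v)` partition `U`, and
`ν(W) ⊆ m⁻¹(W) ⊆ N(W)` because every `u` is matched along an edge.

Conversely, replace each `v ∈ V` by `z v` copies. For `A ⊆ U` we have `A ⊆ ν(N(A))`, so the
lower bounds give Hall's condition `|A| ≤ Σ_{v ∈ N(A)} z v` in the blown-up graph, and Hall's
theorem yields a matching with `|m⁻¹(v)| ≤ z v`; since both sides sum to `|U|`, these are
equalities. The upper bound on `Σ_{v ∈ W} z v` is then the forward direction for this matching.
-/

open Finset

section
variable {U V : Type*} [Fintype U] [DecidableEq V]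
  (E : U → V → Prop) [∀ u v, Decidable (E u v)]

theorem sum_card_fiber_le_card_filter_exists_adj {m : U → V} (hm : ∀ u, E u (m u))
    (W : Finset V) : ∑ v ∈ W, #{u | m u = v} ≤ #{u | ∃ v ∈ W, E u v} := by
  rw [sum_card_fiberwise_eq_card_filter]
  exact card_le_card (monotone_filter_right _ fun u _ h => ⟨m u, h, hm u⟩)

variable [Fintype V]

theorem sum_card_fiber_eq_card (m : U → V) : ∑ v, #{u | m u = v} = Fintype.card U := by
  rw [sum_card_fiberwise_eq_card_filter]
  simp

theorem card_filter_forall_adj_mem_le_sum_card_fiber {m : U → V} (hm : ∀ u, E u (m u))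
    (W : Finset V) : #{u | ∀ v, E u v → v ∈ W} ≤ ∑ v ∈ W, #{u | m u = v} := by
  rw [sum_card_fiberwise_eq_card_filter]
  exact card_le_card (monotone_filter_right _ fun u _ h => h (m u) (hm u))

theorem card_filter_sigma_fin_fst_mem (z : V → ℕ) (W : Finset V) :
    #{p : Σ v, Fin (z v) | p.1 ∈ W} = ∑ v ∈ W, z v := by
  have hW : ({p : Σ v, Fin (z v) | p.1 ∈ W} : Finset _) = W.sigma fun _ => univ := by
    ext
    simp
  rw [hW, card_sigma]
  simp

theorem exists_adj_card_fiber_le_of_forall_card_le_sum {z : V → ℕ}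
    (hν : ∀ W : Finset V, #{u | ∀ v, E u v → v ∈ W} ≤ ∑ v ∈ W, z v) :
    ∃ m : U → V, (∀ u, E u (m u)) ∧ ∀ v, #{u | m u = v} ≤ z v := by
  have hall (A : Finset U) : #A ≤ #{p : Σ v, Fin (z v) | ∃ u ∈ A, E u p.1} :=
    calc #A ≤ #{u | ∀ v, E u v → v ∈ ({v | ∃ u ∈ A, E u v} : Finset V)} :=
          card_le_card fun u hu => by simpa using fun v huv => ⟨u, hu, huv⟩
      _ ≤ ∑ v ∈ {v | ∃ u ∈ A, E u v}, z v := hν _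
      _ = #{p : Σ v, Fin (z v) | ∃ u ∈ A, E u p.1} := by
          rw [← card_filter_sigma_fin_fst_mem]
          simp
  obtain ⟨f, hf_inj, hf⟩ := (Fintype.all_card_le_filter_rel_iff_exists_injective
    fun u (p : Σ v, Fin (z v)) => E u p.1).1 hall
  refine ⟨fun u => (f u).1, hf, fun v => ?_⟩
  calc #{u | (f u).1 = v} ≤ #{p : Σ v, Fin (z v) | p.1 ∈ ({v} : Finset V)} :=
        card_le_card_of_injOn f (fun u hu => by simpa using hu) hf_inj.injOn
    _ = z v := by rw [card_filter_sigma_fin_fst_mem, sum_singleton]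

theorem exists_adj_card_fiber_eq_of_forall_card_le_sum {z : V → ℕ}
    (hsum : ∑ v, z v = Fintype.card U)
    (hν : ∀ W : Finset V, #{u | ∀ v, E u v → v ∈ W} ≤ ∑ v ∈ W, z v) :
    ∃ m : U → V, (∀ u, E u (m u)) ∧ ∀ v, #{u | m u = v} = z v := by
  obtain ⟨m, hm, hle⟩ := exists_adj_card_fiber_le_of_forall_card_le_sum E hν
  have heq := (sum_eq_sum_iff_of_le fun v _ => hle v).1
    ((sum_card_fiber_eq_card m).trans hsum.symm)
  exact ⟨m, hm, fun v => heq v (mem_univ v)⟩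

end

/-- (1) For any left-perfect many-to-one matching `m` with `z_v = |M(v)|`:
`∑_v z_v = |U|` and `|ν(W)| ≤ ∑_{v∈W} z_v ≤ |N(W)|` for all `W ⊆ V`.
(2) Conversely, any `z : V → ℕ` with `∑_v z_v = |U|` and `∑_{v∈W} z_v ≥ |ν(W)|` for all
`W` arises as `|M(v)|` of some left-perfect matching; moreover, if every `u` has a
neighbor then `∑_{v∈W} z_v ≤ |N(W)|` holds automatically. -/
theorem stmt19 {U V : Type*} [Fintype U] [Fintype V] [DecidableEq V]
    (E : U → V → Prop) [∀ u v, Decidable (E u v)] :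
    (∀ m : U → V, (∀ u, E u (m u)) →
      (∑ v : V, (Finset.univ.filter fun u : U => m u = v).card = Fintype.card U) ∧
      ∀ W : Finset V,
        (Finset.univ.filter fun u : U => ∀ v, E u v → v ∈ W).card
            ≤ ∑ v ∈ W, (Finset.univ.filter fun u : U => m u = v).card ∧
        ∑ v ∈ W, (Finset.univ.filter fun u : U => m u = v).card
            ≤ (Finset.univ.filter fun u : U => ∃ v ∈ W, E u v).card) ∧
    (∀ z : V → ℕ, (∑ v : V, z v = Fintype.card U) →
      (∀ W : Finset V,
        (Finset.univ.filter fun u : U => ∀ v, E u v → v ∈ W).card ≤ ∑ v ∈ W, z v) →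
      (∃ m : U → V, (∀ u, E u (m u)) ∧
          ∀ v, (Finset.univ.filter fun u : U => m u = v).card = z v) ∧
      ((∀ u : U, ∃ v, E u v) →
        ∀ W : Finset V,
          ∑ v ∈ W, z v ≤ (Finset.univ.filter fun u : U => ∃ v ∈ W, E u v).card)) := by
  refine ⟨fun m hm => ⟨sum_card_fiber_eq_card m, fun W =>
    ⟨card_filter_forall_adj_mem_le_sum_card_fiber E hm W,
      sum_card_fiber_le_card_filter_exists_adj E hm W⟩⟩, fun z hsum hν => ?_⟩
  obtain ⟨m, hm, hz⟩ := exists_adj_card_fiber_eq_of_forall_card_le_sum E hsum hν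
  refine ⟨⟨m, hm, hz⟩, fun _ W => ?_⟩
  simpa only [hz] using sum_card_fiber_le_card_filter_exists_adj E hm W
end
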